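/- arXiv:2305.08469 — 3 statements merged into one kernel-verified Lean document; each statement's English description precedes it below -/
import Mathlib

section
/- Let d, n be positive integers, let Z ∈ ℝ^{d×n}, and let W : ℝ^{d×n} → ℝ be twice continuously differentiable with W(F) ≥ 0 for all F ∈ ℝ^{d×n} and W(R·Z) = 0 for every R ∈ SO(d). Then the Hessian ℍ := D²W(Z) annihilates infinitesimal rotations of Z: for every skew-symmetric S ∈ ℝ^{d×d} and every F ∈ ℝ^{d×n}, D²W(Z)(S·Z, F) = 0, where S·Z denotes the matrix product and D²W(Z) is the second Fréchet derivative of W at Z viewed as a bilinear form on ℝ^{d×n}. -/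
/-! Since `W ≥ 0` vanishes at every `R·Z` with `R ∈ SO(d)`, each such point is a global minimum,
so `DW(exp(tS)·Z) = 0` for all `t`: for skew-symmetric `S` the matrices `exp(tS)` are rotations.
Differentiating this identity at `t = 0`, where the curve passes through `Z` with velocity `S·Z`,
gives `D²W(Z)(S·Z) = 0`. -/

open Matrix

attribute [local instance] Matrix.frobeniusNormedAddCommGroup Matrix.frobeniusNormedSpace

attribute [local instance] Matrix.frobeniusNormedRing Matrix.frobeniusNormedAlgebra

open NormedSpace

theorem HasFDerivAt.apply_eq_zero_of_comp_eq_zero {𝕜 E F : Type*} [NontriviallyNormedField 𝕜]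
    [NormedAddCommGroup E] [NormedSpace 𝕜 E] [NormedAddCommGroup F] [NormedSpace 𝕜 F]
    {f : E → F} {f' : E →L[𝕜] F} {c : 𝕜 → E} {v : E} {t : 𝕜}
    (hf : HasFDerivAt f f' (c t)) (hc : HasDerivAt c v t) (hfc : ∀ s, f (c s) = 0) :
    f' v = 0 :=
  (hf.comp_hasDerivAt t hc).unique <| by
    simpa only [Function.comp_def, hfc] using hasDerivAt_const t (0 : F)

theorem fderiv_fderiv_apply_eq_zero_of_nonneg_of_comp_eq_zero {E : Type*}
    [NormedAddCommGroup E] [NormedSpace ℝ E] {W : E → ℝ} (hW_nonneg : ∀ x, 0 ≤ W x)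
    {c : ℝ → E} {v : E} {t : ℝ} (hW : DifferentiableAt ℝ (fderiv ℝ W) (c t))
    (hc : HasDerivAt c v t) (hWc : ∀ s, W (c s) = 0) :
    fderiv ℝ (fderiv ℝ W) (c t) v = 0 := by
  have hcrit : ∀ s, fderiv ℝ W (c s) = 0 := fun s =>
    IsLocalMin.fderiv_eq_zero <| Filter.Eventually.of_forall fun x => hWc s ▸ hW_nonneg x
  exact hW.hasFDerivAt.apply_eq_zero_of_comp_eq_zero hc hcrit

namespace Matrix

variable {m : Type*} [Fintype m] [DecidableEq m]

theorem det_exp_nonneg (A : Matrix m m ℝ) : 0 ≤ (exp A).det := by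
  have hsq : exp A = exp ((2⁻¹ : ℝ) • A) * exp ((2⁻¹ : ℝ) • A) := by
    rw [← exp_add_of_commute _ _ (Commute.refl _), ← add_smul]
    norm_num
  rw [hsq, det_mul]
  exact mul_self_nonneg _

theorem exp_mem_orthogonalGroup {S : Matrix m m ℝ} (hS : Sᵀ = -S) :
    exp S ∈ orthogonalGroup m ℝ := by
  rw [mem_orthogonalGroup_iff', ← exp_transpose, hS,
    ← exp_add_of_commute _ _ (Commute.refl S).neg_left, neg_add_cancel, exp_zero]

theorem exp_mem_specialOrthogonalGroup {S : Matrix m m ℝ} (hS : Sᵀ = -S) :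
    exp S ∈ specialOrthogonalGroup m ℝ := by
  have horth := exp_mem_orthogonalGroup hS
  have hdet_sq : (exp S).det * (exp S).det = 1 := by
    simpa using congrArg det ((mem_orthogonalGroup_iff' _ _).1 horth)
  refine mem_specialOrthogonalGroup_iff.2 ⟨horth, ?_⟩
  exact (mul_self_eq_one_iff.1 hdet_sq).resolve_right fun h => by
    linarith [det_exp_nonneg S]

theorem hasDerivAt_exp_smul_mul {n : Type*} [Fintype n] (S : Matrix m m ℝ) (Z : Matrix m n ℝ) :
    HasDerivAt (fun t : ℝ => exp (t • S) * Z) (S * Z) 0 := by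
  have hexp : HasDerivAt (fun t : ℝ => exp (t • S)) S 0 := by
    have h := hasDerivAt_exp_smul_const (𝕂 := ℝ) S 0
    rw [zero_smul, exp_zero, one_mul] at h
    exact h
  exact (mulRightLinearMap m ℝ Z).toContinuousLinearMap.hasFDerivAt.comp_hasDerivAt 0 hexp

end Matrix

theorem hessian_annihilates_infinitesimal_rotations_general
    (d n : ℕ)
    (Z : Matrix (Fin d) (Fin n) ℝ) (W : Matrix (Fin d) (Fin n) ℝ → ℝ)
    (hW : ContDiff ℝ 2 W)
    (hWnonneg : ∀ F : Matrix (Fin d) (Fin n) ℝ, 0 ≤ W F)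
    (hWrot : ∀ R : Matrix (Fin d) (Fin d) ℝ, Rᵀ * R = 1 → R.det = 1 → W (R * Z) = 0) :
    ∀ S : Matrix (Fin d) (Fin d) ℝ, S + Sᵀ = 0 →
      ∀ F : Matrix (Fin d) (Fin n) ℝ,
        fderiv ℝ (fderiv ℝ W) Z (S * Z) F = 0 := by
  intro S hS F
  have hW_rotated : ∀ t : ℝ, W (exp (t • S) * Z) = 0 := fun t => by
    have hskew : (t • S)ᵀ = -(t • S) := by
      rw [transpose_smul, eq_neg_of_add_eq_zero_right hS, smul_neg]
    obtain ⟨horth, hdet⟩ :=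
      mem_specialOrthogonalGroup_iff.1 (exp_mem_specialOrthogonalGroup hskew)
    exact hWrot _ ((mem_orthogonalGroup_iff' _ _).1 horth) hdet
  have h := fderiv_fderiv_apply_eq_zero_of_nonneg_of_comp_eq_zero hWnonneg
    ((hW.fderiv_right le_rfl).differentiable one_ne_zero _) (hasDerivAt_exp_smul_mul S Z)
    hW_rotated
  rw [zero_smul, exp_zero, Matrix.one_mul] at h
  exact DFunLike.congr_fun h F

/-- The Hessian `D²W(Z)` of the cell energy annihilates infinitesimal rotations of `Z`:
for every skew-symmetric `S` and every `F`, `D²W(Z)(S·Z, F) = 0`. -/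
theorem hessian_annihilates_infinitesimal_rotations
    (d n : ℕ) (hd : 0 < d) (hn : 0 < n)
    (Z : Matrix (Fin d) (Fin n) ℝ) (W : Matrix (Fin d) (Fin n) ℝ → ℝ)
    (hW : ContDiff ℝ 2 W)
    (hWnonneg : ∀ F : Matrix (Fin d) (Fin n) ℝ, 0 ≤ W F)
    (hWrot : ∀ R : Matrix (Fin d) (Fin d) ℝ, Rᵀ * R = 1 → R.det = 1 → W (R * Z) = 0) :
    ∀ S : Matrix (Fin d) (Fin d) ℝ, S + Sᵀ = 0 →
      ∀ F : Matrix (Fin d) (Fin n) ℝ,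
        fderiv ℝ (fderiv ℝ W) Z (S * Z) F = 0 :=
  hessian_annihilates_infinitesimal_rotations_general d n Z W hW hWnonneg hWrot
end

section
/- Converse direction of the energy-dissipation-inertia principle. Let H be a finite-dimensional real inner product space, let I : H → ℝ be continuously differentiable, let ρ ≥ 0, ν > 0, T > 0, and let u : ℝ → H be twice continuously differentiable. Suppose the energy-dissipation-inertia equality holds at time T: (ρ/2)‖u'(T)‖² + I(u(T)) + (ν/2)∫₀ᵀ ‖u'(s)‖² ds + (1/(2ν))∫₀ᵀ ‖ρ·u''(s) + ∇I(u(s))‖² ds = (ρ/2)‖u'(0)‖² + I(u(0)). Then u solves the equation of motion: ρ·u''(t) + ν·u'(t) + ∇I(u(t)) = 0 for all t ∈ [0,T]. -/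
/-!
Along any trajectory the mechanical energy `E = ρ/2 ‖u'‖² + I(u)` has derivative
`⟪ρ u'' + ∇I(u), u'⟫`. Expanding the square,
`‖ρ u'' + ν u' + ∇I(u)‖² = ‖ρ u'' + ∇I(u)‖² + 2ν E' + ν² ‖u'‖²`, so `1/(2ν)` times its integral
over `[0, T]` is exactly the left side minus the right side of the energy-dissipation-inertia
equality. Hence the integral of a continuous nonnegative function vanishes, and so does the
function on `[0, T]`.
-/

open MeasureTheory Set
open scoped RealInnerProductSpace

theorem eqOn_zero_of_integral_eq_zero_of_nonneg {f : ℝ → ℝ} {a b : ℝ} (hab : a < b)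
    (hf : ContinuousOn f (Icc a b)) (hnn : ∀ x ∈ Icc a b, 0 ≤ f x)
    (hint : ∫ x in a..b, f x = 0) : EqOn f 0 (Icc a b) := by
  intro c hc
  by_contra hne
  have hpos : (∫ _ in a..b, (0 : ℝ)) < ∫ x in a..b, f x :=
    intervalIntegral.integral_lt_integral_of_continuousOn_of_le_of_exists_lt hab
      continuousOn_const hf (fun x hx => hnn x (Ioc_subset_Icc_self hx))
      ⟨c, hc, lt_of_le_of_ne (hnn c hc) (Ne.symm hne)⟩
  simp [hint] at hpos

section Energy

variable {H : Type*} [NormedAddCommGroup H] [InnerProductSpace ℝ H] [CompleteSpace H]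

noncomputable def mechanicalEnergy (I : H → ℝ) (ρ : ℝ) (u : ℝ → H) (s : ℝ) : ℝ :=
  ρ / 2 * ‖deriv u s‖ ^ 2 + I (u s)

theorem hasDerivAt_mechanicalEnergy {I : H → ℝ} (ρ : ℝ) {u : ℝ → H} {s : ℝ}
    (hI : DifferentiableAt ℝ I (u s)) (hu : DifferentiableAt ℝ u s)
    (hu' : DifferentiableAt ℝ (deriv u) s) :
    HasDerivAt (mechanicalEnergy I ρ u)
      ⟪ρ • deriv (deriv u) s + gradient I (u s), deriv u s⟫ s := by
  have hkin := (hu'.hasDerivAt.norm_sq).const_mul (ρ / 2)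
  have hpot : HasDerivAt (fun t => I (u t)) ⟪gradient I (u s), deriv u s⟫ s := by
    rw [inner_gradient_left]
    exact hI.hasFDerivAt.comp_hasDerivAt s hu.hasDerivAt
  refine (hkin.add hpot).congr_deriv ?_
  rw [inner_add_left, real_inner_smul_left, real_inner_comm]
  ring

end Energy

theorem integral_norm_add_smul_sq_eq {H : Type*} [NormedAddCommGroup H] [InnerProductSpace ℝ H]
    {g v : ℝ → H} {E : ℝ → ℝ} (hg : Continuous g) (hv : Continuous v)
    (hE : ∀ s, HasDerivAt E ⟪g s, v s⟫ s) (ν a b : ℝ) :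
    ∫ s in a..b, ‖g s + ν • v s‖ ^ 2
      = (∫ s in a..b, ‖g s‖ ^ 2) + 2 * ν * (E b - E a) + ν ^ 2 * ∫ s in a..b, ‖v s‖ ^ 2 := by
  have hexpand : ∀ s, ‖g s + ν • v s‖ ^ 2
      = ‖g s‖ ^ 2 + 2 * ν * ⟪g s, v s⟫ + ν ^ 2 * ‖v s‖ ^ 2 := fun s => by
    rw [norm_add_sq_real, real_inner_smul_right, norm_smul, Real.norm_eq_abs, mul_pow, sq_abs]
    ring
  have hcross : Continuous fun s => ⟪g s, v s⟫ := hg.inner hv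
  have hFTC : ∫ s in a..b, ⟪g s, v s⟫ = E b - E a :=
    intervalIntegral.integral_eq_sub_of_hasDerivAt (fun s _ => hE s)
      (hcross.intervalIntegrable _ _)
  have i1 : IntervalIntegrable (fun s => ‖g s‖ ^ 2) volume a b :=
    (hg.norm.pow 2).intervalIntegrable a b
  have i2 : IntervalIntegrable (fun s => 2 * ν * ⟪g s, v s⟫) volume a b :=
    (continuous_const.mul hcross).intervalIntegrable a b
  have i3 : IntervalIntegrable (fun s => ν ^ 2 * ‖v s‖ ^ 2) volume a b :=
    (continuous_const.mul (hv.norm.pow 2)).intervalIntegrable a b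
  simp only [hexpand]
  rw [intervalIntegral.integral_add (i1.add i2) i3, intervalIntegral.integral_add i1 i2,
    intervalIntegral.integral_const_mul, intervalIntegral.integral_const_mul, hFTC]

theorem equation_of_motion_of_energy_dissipation_inertia_equality_general
    {H : Type*} [NormedAddCommGroup H] [InnerProductSpace ℝ H] [FiniteDimensional ℝ H]
    (I : H → ℝ) (hI : ContDiff ℝ 1 I)
    (ρ ν T : ℝ) (hν : 0 < ν) (hT : 0 < T)
    (u : ℝ → H) (hu : ContDiff ℝ 2 u)
    (hEDI : ρ / 2 * ‖deriv u T‖ ^ 2 + I (u T)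
        + ν / 2 * (∫ s in (0 : ℝ)..T, ‖deriv u s‖ ^ 2)
        + 1 / (2 * ν) * (∫ s in (0 : ℝ)..T, ‖ρ • deriv (deriv u) s + gradient I (u s)‖ ^ 2)
      = ρ / 2 * ‖deriv u 0‖ ^ 2 + I (u 0)) :
    ∀ t ∈ Set.Icc (0 : ℝ) T,
      ρ • deriv (deriv u) t + ν • deriv u t + gradient I (u t) = 0 := by
  set g : ℝ → H := fun s => ρ • deriv (deriv u) s + gradient I (u s)
  have hv : Continuous (deriv u) := hu.continuous_deriv one_le_two
  have hgradI : Continuous (gradient I) :=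
    (InnerProductSpace.toDual ℝ H).symm.continuous.comp (hI.continuous_fderiv one_ne_zero)
  have hg : Continuous g :=
    (((hu.deriv' (n := 1)).continuous_deriv le_rfl).const_smul ρ).add (hgradI.comp hu.continuous)
  have hE : ∀ s, HasDerivAt (mechanicalEnergy I ρ u) ⟪g s, deriv u s⟫ s := fun s =>
    hasDerivAt_mechanicalEnergy ρ (hI.differentiable one_ne_zero _)
      (hu.differentiable two_ne_zero _) (hu.differentiable_deriv_two _)
  have hzero : ∫ s in (0 : ℝ)..T, ‖g s + ν • deriv u s‖ ^ 2 = 0 := by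
    rw [integral_norm_add_smul_sq_eq hg hv hE]
    simp only [mechanicalEnergy]
    field_simp at hEDI
    linear_combination hEDI
  intro t ht
  have hvanish := eqOn_zero_of_integral_eq_zero_of_nonneg hT
    ((hg.add (hv.const_smul ν)).norm.pow 2).continuousOn (fun _ _ => sq_nonneg _) hzero ht
  rw [add_right_comm]
  simpa using hvanish

/-- Converse direction of the energy-dissipation-inertia principle:
if the energy-dissipation-inertia equality holds at time `T`, then `u` solves the
equation of motion `ρ u'' + ν u' + ∇I(u) = 0` on `[0,T]`. -/
theorem equation_of_motion_of_energy_dissipation_inertia_equality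
    {H : Type*} [NormedAddCommGroup H] [InnerProductSpace ℝ H] [FiniteDimensional ℝ H]
    (I : H → ℝ) (hI : ContDiff ℝ 1 I)
    (ρ ν T : ℝ) (hρ : 0 ≤ ρ) (hν : 0 < ν) (hT : 0 < T)
    (u : ℝ → H) (hu : ContDiff ℝ 2 u)
    (hEDI : ρ / 2 * ‖deriv u T‖ ^ 2 + I (u T)
        + ν / 2 * (∫ s in (0 : ℝ)..T, ‖deriv u s‖ ^ 2)
        + 1 / (2 * ν) * (∫ s in (0 : ℝ)..T, ‖ρ • deriv (deriv u) s + gradient I (u s)‖ ^ 2)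
      = ρ / 2 * ‖deriv u 0‖ ^ 2 + I (u 0)) :
    ∀ t ∈ Set.Icc (0 : ℝ) T,
      ρ • deriv (deriv u) t + ν • deriv u t + gradient I (u t) = 0 :=
  equation_of_motion_of_energy_dissipation_inertia_equality_general I hI ρ ν T hν hT u hu hEDI
end

section
/- Integral bound for the scaled gradient of the cell energy. Let d, n, m be positive integers, let Z ∈ ℝ^{d×n}, and let W : ℝ^{d×n} → ℝ be twice continuously differentiable with W(F) ≥ 0 for all F, W(Z) = 0, and such that there exists c > 0 with ‖DW(F)‖ ≤ c(‖F‖² + 1) for all F ∈ ℝ^{d×n}. Then there exists c' > 0 such that for every δ ∈ (0,1], every measurable set Ω̃ ⊆ ℝ^m of finite Lebesgue measure, and every measurable G : ℝ^m → ℝ^{d×n} with ∫_{Ω̃} ‖G(x)‖² dx < ∞, it holds that ∫_{Ω̃} δ⁻¹ ‖DW(Z + δ·G(x))‖ dx ≤ c' ( |Ω̃| + ∫_{Ω̃} ‖G(x)‖² dx ), where |Ω̃| denotes the Lebesgue measure of Ω̃. -/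
open Matrix MeasureTheory

attribute [local instance] Matrix.frobeniusNormedAddCommGroup Matrix.frobeniusNormedSpace

noncomputable instance matrixFrobeniusOpNorm (d n : ℕ) : Norm (Matrix (Fin d) (Fin n) ℝ →L[ℝ] ℝ) :=
  ContinuousLinearMap.hasOpNorm

/-!
Since `W ≥ 0 = W Z`, the gradient `DW` vanishes at `Z`; being `C¹`, it is Lipschitz on the
closed unit ball around `Z`. Hence `‖DW (Z + B)‖` is at most linear in `‖B‖` for `‖B‖ ≤ 1`
and, by the growth assumption, at most quadratic for `‖B‖ > 1`. With `B = δ A` this gives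
`δ⁻¹ ‖DW (Z + δ A)‖ ≤ C (1 + ‖A‖²)` uniformly in `δ ∈ (0, 1]`, which is then integrated.
-/

open Metric NNReal

theorem norm_le_mul_norm_sub_add_sq_of_lipschitzOnWith_closedBall
    {E F : Type*} [SeminormedAddCommGroup E] [SeminormedAddCommGroup F]
    {f : E → F} {z : E} {K : ℝ≥0} {c : ℝ} (hc : 0 ≤ c) (hfz : f z = 0)
    (hlip : LipschitzOnWith K f (closedBall z 1))
    (hgrowth : ∀ y, ‖f y‖ ≤ c * (‖y‖ ^ 2 + 1)) (y : E) :
    ‖f y‖ ≤ max (K : ℝ) (c * ((‖z‖ + 1) ^ 2 + 1)) * (‖y - z‖ + ‖y - z‖ ^ 2) := by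
  set s := ‖y - z‖
  have hs : 0 ≤ s := norm_nonneg _
  by_cases hnear : s ≤ 1
  · calc ‖f y‖ = ‖f y - f z‖ := by rw [hfz, sub_zero]
      _ ≤ K * s := hlip.norm_sub_le (mem_closedBall_iff_norm.2 hnear) (mem_closedBall_self zero_le_one)
      _ ≤ max (K : ℝ) (c * ((‖z‖ + 1) ^ 2 + 1)) * (s + s ^ 2) := by
        gcongr
        · exact le_max_left _ _
        · nlinarith
  · rw [not_le] at hnear
    have hy : ‖y‖ ≤ (‖z‖ + 1) * s := by
      calc ‖y‖ ≤ ‖z‖ + s := by simpa [s] using norm_le_norm_add_norm_sub' y z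
        _ ≤ (‖z‖ + 1) * s := by nlinarith [norm_nonneg z]
    calc ‖f y‖ ≤ c * (‖y‖ ^ 2 + 1) := hgrowth y
      _ ≤ c * ((‖z‖ + 1) ^ 2 + 1) * s ^ 2 := by
        rw [mul_assoc]
        gcongr
        nlinarith [pow_le_pow_left₀ (norm_nonneg y) hy 2]
      _ ≤ max (K : ℝ) (c * ((‖z‖ + 1) ^ 2 + 1)) * (s + s ^ 2) := by
        gcongr
        · exact le_max_right _ _
        · linarith

theorem inv_mul_norm_add_smul_le {E F : Type*} [SeminormedAddCommGroup E] [NormedSpace ℝ E]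
    [SeminormedAddCommGroup F] {f : E → F} {z : E} {C : ℝ} (hC : 0 ≤ C)
    (hf : ∀ y, ‖f y‖ ≤ C * (‖y - z‖ + ‖y - z‖ ^ 2)) {δ : ℝ} (hδ : δ ∈ Set.Ioc 0 1) (a : E) :
    δ⁻¹ * ‖f (z + δ • a)‖ ≤ 2 * C * (1 + ‖a‖ ^ 2) := by
  obtain ⟨hδ0, hδ1⟩ := hδ
  have hsub : ‖z + δ • a - z‖ = δ * ‖a‖ := by
    rw [add_sub_cancel_left, norm_smul, Real.norm_of_nonneg hδ0.le]
  calc δ⁻¹ * ‖f (z + δ • a)‖ ≤ δ⁻¹ * (C * (δ * ‖a‖ + (δ * ‖a‖) ^ 2)) := by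
        rw [← hsub]; gcongr; exact hf _
    _ = C * (‖a‖ + δ * ‖a‖ ^ 2) := by field_simp
    _ ≤ C * (2 * (1 + ‖a‖ ^ 2)) := by
        gcongr
        nlinarith [sq_nonneg (‖a‖ - 1), mul_le_mul_of_nonneg_right hδ1 (sq_nonneg ‖a‖)]
    _ = 2 * C * (1 + ‖a‖ ^ 2) := by ring

theorem setIntegral_le_mul_measureReal_add_setIntegral {α : Type*} [MeasurableSpace α]
    {μ : Measure α} {s : Set α} (hs : μ s < ⊤) {f g : α → ℝ} {C : ℝ} (hf : ∀ x, 0 ≤ f x)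
    (hfg : ∀ x, f x ≤ C * (1 + g x)) (hg : IntegrableOn g s μ) :
    ∫ x in s, f x ∂μ ≤ C * (μ.real s + ∫ x in s, g x ∂μ) := by
  have hone : IntegrableOn (fun _ => (1 : ℝ)) s μ := integrableOn_const hs.ne
  calc ∫ x in s, f x ∂μ ≤ ∫ x in s, C * (1 + g x) ∂μ :=
        integral_mono_of_nonneg (.of_forall hf) ((hone.add hg).const_mul C) (.of_forall hfg)
    _ = C * (μ.real s + ∫ x in s, g x ∂μ) := by
        rw [integral_const_mul, integral_add hone hg, setIntegral_const, smul_eq_mul, mul_one]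

theorem cell_energy_scaled_gradient_integral_bound_general
    (d n m : ℕ)
    (Z : Matrix (Fin d) (Fin n) ℝ) (W : Matrix (Fin d) (Fin n) ℝ → ℝ)
    (hW : ContDiff ℝ 2 W)
    (hWnonneg : ∀ F : Matrix (Fin d) (Fin n) ℝ, 0 ≤ W F)
    (hWZ : W Z = 0)
    (c : ℝ) (hc : 0 < c)
    (hgrowth : ∀ F : Matrix (Fin d) (Fin n) ℝ, ‖fderiv ℝ W F‖ ≤ c * (‖F‖ ^ 2 + 1)) :
    ∃ c' > (0 : ℝ), ∀ δ ∈ Set.Ioc (0 : ℝ) 1,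
      ∀ Ω : Set (EuclideanSpace ℝ (Fin m)), MeasurableSet Ω → volume Ω < ⊤ →
      ∀ G : EuclideanSpace ℝ (Fin m) → Matrix (Fin d) (Fin n) ℝ, MeasureTheory.StronglyMeasurable G →
        IntegrableOn (fun x => ‖G x‖ ^ 2) Ω volume →
        (∫ x in Ω, δ⁻¹ * ‖fderiv ℝ W (Z + δ • G x)‖)
          ≤ c' * ((volume Ω).toReal + ∫ x in Ω, ‖G x‖ ^ 2) := by
  have hDWZ : fderiv ℝ W Z = 0 :=
    IsLocalMin.fderiv_eq_zero (.of_forall fun F => hWZ ▸ hWnonneg F)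
  obtain ⟨K, hK⟩ := (hW.fderiv_right (m := 1) (by norm_num)).contDiffOn.exists_lipschitzOnWith
    one_ne_zero (convex_closedBall Z 1) (isCompact_closedBall Z 1)
  set C := max (K : ℝ) (c * ((‖Z‖ + 1) ^ 2 + 1))
  have hC : 0 < C := lt_max_of_lt_right (by positivity)
  refine ⟨2 * C, by positivity, fun δ hδ Ω _ hΩ G _ hG => ?_⟩
  exact setIntegral_le_mul_measureReal_add_setIntegral hΩ
    (fun _ => mul_nonneg (inv_nonneg.2 hδ.1.le) (ContinuousLinearMap.opNorm_nonneg _))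
    (fun x => inv_mul_norm_add_smul_le hC.le
      (norm_le_mul_norm_sub_add_sq_of_lipschitzOnWith_closedBall hc.le hDWZ hK hgrowth) hδ (G x))
    hG

/-- Integral bound for the scaled gradient of the cell energy: under the growth assumptions
on `DW`, there is `c' > 0` such that for every `δ ∈ (0,1]`, every measurable `Ω̃ ⊆ ℝ^m` of
finite Lebesgue measure and every measurable `G` with `∫_{Ω̃} ‖G‖² < ∞`,
`∫_{Ω̃} δ⁻¹ ‖DW(Z + δ G(x))‖ dx ≤ c' (|Ω̃| + ∫_{Ω̃} ‖G‖² dx)`. -/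
theorem cell_energy_scaled_gradient_integral_bound
    (d n m : ℕ) (hd : 0 < d) (hn : 0 < n) (hm : 0 < m)
    (Z : Matrix (Fin d) (Fin n) ℝ) (W : Matrix (Fin d) (Fin n) ℝ → ℝ)
    (hW : ContDiff ℝ 2 W)
    (hWnonneg : ∀ F : Matrix (Fin d) (Fin n) ℝ, 0 ≤ W F)
    (hWZ : W Z = 0)
    (c : ℝ) (hc : 0 < c)
    (hgrowth : ∀ F : Matrix (Fin d) (Fin n) ℝ, ‖fderiv ℝ W F‖ ≤ c * (‖F‖ ^ 2 + 1)) :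
    ∃ c' > (0 : ℝ), ∀ δ ∈ Set.Ioc (0 : ℝ) 1,
      ∀ Ω : Set (EuclideanSpace ℝ (Fin m)), MeasurableSet Ω → volume Ω < ⊤ →
      ∀ G : EuclideanSpace ℝ (Fin m) → Matrix (Fin d) (Fin n) ℝ, MeasureTheory.StronglyMeasurable G →
        IntegrableOn (fun x => ‖G x‖ ^ 2) Ω volume →
        (∫ x in Ω, δ⁻¹ * ‖fderiv ℝ W (Z + δ • G x)‖)
          ≤ c' * ((volume Ω).toReal + ∫ x in Ω, ‖G x‖ ^ 2) :=
  cell_energy_scaled_gradient_integral_bound_general d n m Z W hW hWnonneg hWZ c hc hgrowth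
end
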